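/- Let G be a connected graph on [n] that has the interval property with respect to its labeling, let H = in_lex(G), and let ℓ be the length of the longest induced path of G. Then indmatch(H) = ℓ. -/

import Mathlib

open SimpleGraph

/-- `G` has the interval property with respect to its labeling: for every edge `{i,j}`
with `i < j`, every pair `{k,l}` with `i ≤ k < l ≤ j` is an edge of `G`. -/
def HasIntervalProperty {n : ℕ} (G : SimpleGraph (Fin n)) : Prop :=
  ∀ i j k l : Fin n, G.Adj i j → i < j → i ≤ k → k < l → l ≤ j → G.Adj k l

/-- The bipartite graph `in_lex(G)` on `{x_1,…,x_n} ∪ {y_1,…,y_n}` (here `Sum.inl i = x_i`,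
`Sum.inr j = y_j`) whose edges are the pairs `{x_i, y_j}` with `i < j` and `{i,j} ∈ E(G)`. -/
def inLex {n : ℕ} (G : SimpleGraph (Fin n)) : SimpleGraph (Fin n ⊕ Fin n) :=
  SimpleGraph.fromRel (fun u v =>
    ∃ i j : Fin n, i < j ∧ G.Adj i j ∧ u = Sum.inl i ∧ v = Sum.inr j)

/-- `M` is an induced matching of `H`: a set of edges of `H`, pairwise vertex-disjoint,
such that no edge of `H` joins two vertices lying in distinct edges of `M`. -/
def IsInducedMatching {V : Type*} (H : SimpleGraph V) (M : Set (Sym2 V)) : Prop :=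
  M ⊆ H.edgeSet ∧
  (∀ e ∈ M, ∀ f ∈ M, e ≠ f → ∀ v, v ∈ e → v ∉ f) ∧
  (∀ e ∈ M, ∀ f ∈ M, e ≠ f → ∀ u ∈ e, ∀ v ∈ f, ¬ H.Adj u v)

/-- An indexed family of `m` pairwise distinct edges forming an induced matching of `H`. -/
def IsInducedMatchingFamily {V : Type*} (H : SimpleGraph V) {m : ℕ} (f : Fin m → Sym2 V) : Prop :=
  Function.Injective f ∧ IsInducedMatching H (Set.range f)

/-- `p` is an induced path of length `l` in `G`: `l+1` distinct vertices such that the edges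
of `G` among them are exactly the consecutive pairs. -/
def IsInducedPath {V : Type*} (G : SimpleGraph V) (l : ℕ) (p : Fin (l + 1) → V) : Prop :=
  Function.Injective p ∧
  ∀ a b : Fin (l + 1), G.Adj (p a) (p b) ↔ ((a : ℕ) + 1 = b ∨ (b : ℕ) + 1 = a)

/-- `c` is an induced cycle of length `k` in `H`: `k` distinct vertices such that the edges
of `H` among them are exactly the consecutive pairs (cyclically). -/
def IsInducedCycle {V : Type*} (H : SimpleGraph V) (k : ℕ) (c : Fin k → V) : Prop :=
  3 ≤ k ∧ Function.Injective c ∧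
  ∀ a b : Fin k, H.Adj (c a) (c b) ↔ (((a : ℕ) + 1) % k = b ∨ ((b : ℕ) + 1) % k = a)

/-- Condition (∗) for an induced matching `{x_{i t}, y_{j t}}` of `in_lex(G)`: for every
index `a` and vertex `t < i a` with `{t, j a} ∈ E(G)`, replacing `x_{i a}` by `x_t`
does not yield an induced matching of `in_lex(G)`. -/
def CondStar {n m : ℕ} (G : SimpleGraph (Fin n)) (i j : Fin m → Fin n) : Prop :=
  ∀ a : Fin m, ∀ t : Fin n, t < i a → G.Adj t (j a) →
    ¬ IsInducedMatchingFamily (inLex G)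
        (fun u => if u = a then s(Sum.inl t, Sum.inr (j u))
                  else s(Sum.inl (i u), Sum.inr (j u)))


/-!
An induced path of a closed graph is monotone in the labeling, so the pairs `x_{p t} y_{p (t+1)}`
of consecutive vertices form an induced matching of `in_lex(G)`: `ℓ ≤ m`.

Conversely, among the induced matchings `{x_{i t} y_{j t}}` of maximum size `m` pick one with
`∑ i t` minimal and sort it, so that `i 0 < j 0 ≤ i 1 < j 1 ≤ ⋯`. By minimality no `x_{i t}` can be
moved further down (condition `(∗)`), by maximality no edge can be added, and together with the
adjacency of consecutive vertices of a connected closed graph this forces `i t ~ i (t+1)`. Then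
`i 0, …, i (m-1), j (m-1)` is an induced path of length `m`.
-/

open Function

section PairEdges

variable {α β : Type*} {H : SimpleGraph (α ⊕ β)} {m : ℕ}

def pairEdges (i : Fin m → α) (j : Fin m → β) : Fin m → Sym2 (α ⊕ β) :=
  fun t => s(Sum.inl (i t), Sum.inr (j t))

@[simp]
lemma pairEdges_apply (i : Fin m → α) (j : Fin m → β) (t : Fin m) :
    pairEdges i j t = s(Sum.inl (i t), Sum.inr (j t)) := rfl

/-- Vertex-disjointness comes for free: `x_{i a} = x_{i b}` or `y_{j a} = y_{j b}` would make
`x_{i a} y_{j b}` an edge. -/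
lemma isInducedMatchingFamily_pairEdges_iff (hl : ∀ a a', ¬H.Adj (.inl a) (.inl a'))
    (hr : ∀ b b', ¬H.Adj (.inr b) (.inr b')) {i : Fin m → α} {j : Fin m → β} :
    IsInducedMatchingFamily H (pairEdges i j) ↔
      (∀ t, H.Adj (.inl (i t)) (.inr (j t))) ∧
      ∀ a b, a ≠ b → ¬H.Adj (.inl (i a)) (.inr (j b)) := by
  constructor
  · rintro ⟨hinj, hsub, -, hind⟩
    refine ⟨fun t => hsub ⟨t, rfl⟩, fun a b hab => ?_⟩
    exact hind _ ⟨a, rfl⟩ _ ⟨b, rfl⟩ (hinj.ne hab) _ (by simp) _ (by simp)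
  · rintro ⟨hadj, hnon⟩
    have hi : Injective i := fun a b h => by_contra fun hab => hnon a b hab (h ▸ hadj b)
    have hj : Injective j := fun a b h => by_contra fun hab => hnon a b hab (h ▸ hadj a)
    refine ⟨fun a b h => hi (by simpa using h : i a = i b ∧ j a = j b).1, ?_, ?_, ?_⟩
    · rintro _ ⟨t, rfl⟩
      exact hadj t
    · rintro _ ⟨a, rfl⟩ _ ⟨b, rfl⟩ hne v hva hvb
      have hab : a ≠ b := fun h => hne (h ▸ rfl)
      simp only [pairEdges_apply, Sym2.mem_iff] at hva hvb
      rcases hva with rfl | rfl <;> rcases hvb with h | h <;> simp_all [hi.eq_iff, hj.eq_iff]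
    · rintro _ ⟨a, rfl⟩ _ ⟨b, rfl⟩ hne u hu v hv
      have hab : a ≠ b := fun h => hne (h ▸ rfl)
      simp only [pairEdges_apply, Sym2.mem_iff] at hu hv
      rcases hu with rfl | rfl <;> rcases hv with rfl | rfl
      · exact hl _ _
      · exact hnon a b hab
      · exact fun h => hnon b a hab.symm h.symm
      · exact hr _ _

lemma IsInducedMatchingFamily.comp_equiv {f : Fin m → Sym2 (α ⊕ β)}
    (hf : IsInducedMatchingFamily H f) (σ : Fin m ≃ Fin m) : IsInducedMatchingFamily H (f ∘ σ) :=
  ⟨hf.1.comp σ.injective, by rw [EquivLike.range_comp]; exact hf.2⟩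

lemma IsInducedMatchingFamily.injective_left {i : Fin m → α} {j : Fin m → β}
    (hij : IsInducedMatchingFamily H (pairEdges i j)) : Injective i := by
  intro a b h
  by_contra hab
  exact hij.2.2.1 _ ⟨a, rfl⟩ _ ⟨b, rfl⟩ (hij.1.ne hab) (.inl (i a)) (by simp) (by simp [h])

lemma IsInducedMatchingFamily.ncard_range {f : Fin m → Sym2 (α ⊕ β)}
    (hf : IsInducedMatchingFamily H f) : (Set.range f).ncard = m := by
  rw [Set.ncard_range_of_injective hf.1, Nat.card_eq_fintype_card, Fintype.card_fin]

lemma IsInducedMatching.exists_isInducedMatchingFamily_pairEdges (hl : ∀ a a', ¬H.Adj (.inl a) (.inl a'))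
    (hr : ∀ b b', ¬H.Adj (.inr b) (.inr b')) {M : Set (Sym2 (α ⊕ β))}
    (hM : IsInducedMatching H M) (hfin : M.Finite) (hcard : M.ncard = m) :
    ∃ (i : Fin m → α) (j : Fin m → β), IsInducedMatchingFamily H (pairEdges i j) := by
  subst hcard
  have : Finite M := hfin
  let e : Fin M.ncard ≃ M := (Finite.equivFinOfCardEq (Nat.card_coe_set_eq M)).symm
  have hform : ∀ t, ∃ a b, (e t : Sym2 (α ⊕ β)) = s(.inl a, .inr b) := by
    intro t
    induction h : (e t : Sym2 (α ⊕ β)) with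
    | h u v =>
      have huv : H.Adj u v := by simpa [h] using hM.1 (e t).2
      rcases u with a | b <;> rcases v with a' | b'
      · exact absurd huv (hl _ _)
      · exact ⟨a, b', rfl⟩
      · exact ⟨a', b, Sym2.eq_swap⟩
      · exact absurd huv (hr _ _)
  choose i j hij using hform
  have hfun : pairEdges i j = fun t => (e t : Sym2 (α ⊕ β)) := funext fun t => (hij t).symm
  have hrange : Set.range (fun t => (e t : Sym2 (α ⊕ β))) = M := by
    ext x
    exact ⟨fun ⟨t, ht⟩ => ht ▸ (e t).2, fun hx => ⟨e.symm ⟨x, hx⟩, by simp⟩⟩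
  refine ⟨i, j, ?_⟩
  rw [hfun]
  exact ⟨Subtype.val_injective.comp e.injective, by rwa [hrange]⟩

lemma IsInducedMatchingFamily.update_left (hl : ∀ a a', ¬H.Adj (.inl a) (.inl a'))
    (hr : ∀ b b', ¬H.Adj (.inr b) (.inr b')) (hij : IsInducedMatchingFamily H (pairEdges i j))
    {b : Fin m} {u : α} (hadj : H.Adj (.inl u) (.inr (j b)))
    (hnon : ∀ t, t ≠ b → ¬H.Adj (.inl u) (.inr (j t))) :
    IsInducedMatchingFamily H (pairEdges (update i b u) j) := by
  rw [isInducedMatchingFamily_pairEdges_iff hl hr] at hij ⊢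
  refine ⟨fun t => ?_, fun a c hac => ?_⟩
  · rcases eq_or_ne t b with rfl | htb
    · simpa using hadj
    · simpa [htb] using hij.1 t
  · rcases eq_or_ne a b with rfl | hab
    · simpa using hnon c hac.symm
    · simpa [hab] using hij.2 a c hac

lemma IsInducedMatchingFamily.snoc (hl : ∀ a a', ¬H.Adj (.inl a) (.inl a'))
    (hr : ∀ b b', ¬H.Adj (.inr b) (.inr b')) (hij : IsInducedMatchingFamily H (pairEdges i j))
    {u : α} {v : β} (hadj : H.Adj (.inl u) (.inr v)) (hu : ∀ t, ¬H.Adj (.inl u) (.inr (j t)))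
    (hv : ∀ t, ¬H.Adj (.inl (i t)) (.inr v)) :
    IsInducedMatchingFamily H
      (pairEdges (Fin.snoc (α := fun _ => α) i u) (Fin.snoc (α := fun _ => β) j v)) := by
  rw [isInducedMatchingFamily_pairEdges_iff hl hr] at hij ⊢
  refine ⟨Fin.lastCases (by simpa using hadj) fun t => by simpa using hij.1 t, ?_⟩
  refine Fin.lastCases (Fin.lastCases (by simp) fun c _ => by simpa using hu c) fun a => ?_
  refine Fin.lastCases (fun _ => by simpa using hv a) fun c hac => ?_
  simpa using hij.2 a c fun h => hac (h ▸ rfl)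

end PairEdges

section IntervalProperty

variable {n : ℕ} {G : SimpleGraph (Fin n)}

lemma HasIntervalProperty.adj_of_adj_of_lt_of_lt (hG : HasIntervalProperty G) {u v w : Fin n}
    (huw : G.Adj u w) (hvw : G.Adj v w) (hu : u < w) (hv : v < w) (huv : u ≠ v) :
    G.Adj u v := by
  rcases huv.lt_or_gt with h | h
  · exact hG u w u v huw hu le_rfl h hv.le
  · exact (hG v w v u hvw hv le_rfl h hu.le).symm

lemma HasIntervalProperty.adj_of_adj_of_gt_of_gt (hG : HasIntervalProperty G) {u v w : Fin n}
    (hwu : G.Adj w u) (hwv : G.Adj w v) (hu : w < u) (hv : w < v) (huv : u ≠ v) :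
    G.Adj u v := by
  rcases huv.lt_or_gt with h | h
  · exact hG w v u v hwv hv hu.le h le_rfl
  · exact (hG w u v u hwu hu hv.le h le_rfl).symm

/-- A walk from `u` to `u + 1` has an edge jumping over the gap between them. -/
lemma HasIntervalProperty.adj_of_val_add_one (hG : HasIntervalProperty G)
    (hconn : G.Preconnected) {u v : Fin n} (huv : u.val + 1 = v.val) : G.Adj u v := by
  obtain ⟨w⟩ := hconn u v
  obtain ⟨d, -, hd₁, hd₂⟩ := w.exists_boundary_dart (Set.Iic u) (Set.mem_Iic.2 le_rfl)
    (Set.notMem_Iic.2 (Fin.lt_def.2 (by omega)))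
  simp only [Set.mem_Iic, not_le] at hd₁ hd₂
  exact hG _ _ u v d.adj (hd₁.trans_lt hd₂) hd₁ (Fin.lt_def.2 (by omega))
    (Fin.le_def.2 (by rw [Fin.lt_def] at hd₂; omega))

variable {l : ℕ} {p : Fin (l + 1) → Fin n}

lemma IsInducedPath.comp_rev (hp : IsInducedPath G l p) : IsInducedPath G l (p ∘ Fin.rev) := by
  refine ⟨hp.1.comp Fin.rev_injective, fun a b => ?_⟩
  simp only [comp_apply, hp.2, Fin.val_rev]
  omega

lemma IsInducedPath.lt_iff_lt (hG : HasIntervalProperty G) (hp : IsInducedPath G l p)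
    {a b c : Fin (l + 1)} (hab : a.val + 1 = b.val) (hbc : b.val + 1 = c.val) :
    p a < p b ↔ p b < p c := by
  have hpab : G.Adj (p a) (p b) := (hp.2 a b).2 (.inl hab)
  have hpbc : G.Adj (p b) (p c) := (hp.2 b c).2 (.inl hbc)
  have hpac : ¬G.Adj (p a) (p c) := by rw [hp.2 a c]; omega
  have hac : p a ≠ p c := hp.1.ne (Fin.ne_of_val_ne (by omega))
  constructor
  · intro h
    refine lt_of_not_ge fun h' => hpac ?_
    exact hG.adj_of_adj_of_lt_of_lt hpab hpbc.symm h (h'.lt_of_ne hpbc.ne.symm) hac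
  · intro h
    refine lt_of_not_ge fun h' => hpac ?_
    exact hG.adj_of_adj_of_gt_of_gt hpab.symm hpbc (h'.lt_of_ne hpab.ne.symm) h hac

lemma IsInducedPath.strictMono_or_strictAnti (hG : HasIntervalProperty G)
    (hp : IsInducedPath G l p) : StrictMono p ∨ StrictAnti p := by
  cases l with
  | zero => exact .inl fun a b hab => absurd hab (by omega)
  | succ k =>
    have hstep : ∀ t : Fin (k + 1), p t.castSucc < p t.succ ↔ p 0 < p 1 := by
      refine Fin.induction (by rfl) fun t ih => ?_
      rw [← ih, ← Fin.succ_castSucc]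
      exact (hp.lt_iff_lt hG (by simp) (by simp)).symm
    by_cases h01 : p 0 < p 1
    · exact .inl (Fin.strictMono_iff_lt_succ.2 fun t => (hstep t).2 h01)
    · refine .inr (Fin.strictAnti_iff_succ_lt.2 fun t => ?_)
      have hne : p t.succ ≠ p t.castSucc := hp.1.ne (Fin.castSucc_lt_succ (i := t)).ne'
      exact (not_lt.1 ((hstep t).not.2 h01)).lt_of_ne hne

lemma IsInducedPath.exists_strictMono (hG : HasIntervalProperty G) (hp : IsInducedPath G l p) :
    ∃ q : Fin (l + 1) → Fin n, IsInducedPath G l q ∧ StrictMono q := by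
  rcases hp.strictMono_or_strictAnti hG with h | h
  · exact ⟨p, hp, h⟩
  · exact ⟨p ∘ Fin.rev, hp.comp_rev, h.comp Fin.rev_strictAnti⟩

end IntervalProperty

section InLex

variable {n : ℕ} {G : SimpleGraph (Fin n)}

@[simp]
lemma inLex_adj_inl_inr {a b : Fin n} : (inLex G).Adj (.inl a) (.inr b) ↔ a < b ∧ G.Adj a b := by
  simp [inLex, fromRel_adj]

lemma inLex_not_adj_inl_inl (a a' : Fin n) : ¬(inLex G).Adj (.inl a) (.inl a') := by
  simp [inLex, fromRel_adj]

lemma inLex_not_adj_inr_inr (b b' : Fin n) : ¬(inLex G).Adj (.inr b) (.inr b') := by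
  simp [inLex, fromRel_adj]

lemma isInducedMatchingFamily_inLex_iff {m : ℕ} {i j : Fin m → Fin n} :
    IsInducedMatchingFamily (inLex G) (pairEdges i j) ↔
      (∀ t, i t < j t ∧ G.Adj (i t) (j t)) ∧ ∀ a b, a ≠ b → ¬(i a < j b ∧ G.Adj (i a) (j b)) := by
  simp only [isInducedMatchingFamily_pairEdges_iff inLex_not_adj_inl_inl inLex_not_adj_inr_inr,
    inLex_adj_inl_inr]

lemma IsInducedPath.isInducedMatchingFamily_inLex {l : ℕ} {p : Fin (l + 1) → Fin n}
    (hp : IsInducedPath G l p) (hmono : StrictMono p) :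
    IsInducedMatchingFamily (inLex G) (pairEdges (p ∘ Fin.castSucc) (p ∘ Fin.succ)) := by
  rw [isInducedMatchingFamily_inLex_iff]
  refine ⟨fun t => ⟨hmono Fin.castSucc_lt_succ, (hp.2 _ _).2 (.inl (by simp))⟩, ?_⟩
  rintro a b hab ⟨hlt, hadj⟩
  rcases (hp.2 _ _).1 hadj with h | h
  · exact hab (Fin.ext (by simpa using h))
  · refine (hmono (Fin.lt_def.2 ?_)).not_gt hlt
    simp only [Fin.val_succ, Fin.val_castSucc] at h ⊢
    omega

lemma HasIntervalProperty.exists_isInducedMatching_inLex (hG : HasIntervalProperty G) {l : ℕ}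
    {p : Fin (l + 1) → Fin n} (hp : IsInducedPath G l p) :
    ∃ M, IsInducedMatching (inLex G) M ∧ M.ncard = l := by
  obtain ⟨q, hq, hmono⟩ := hp.exists_strictMono hG
  have hM := hq.isInducedMatchingFamily_inLex hmono
  exact ⟨_, hM.2, hM.ncard_range⟩

end InLex

section SortedFamily

variable {n m : ℕ} {G : SimpleGraph (Fin n)} {i j : Fin m → Fin n}

lemma condStar_iff :
    CondStar G i j ↔ ∀ a t, t < i a → G.Adj t (j a) →
      ¬IsInducedMatchingFamily (inLex G) (pairEdges (update i a t) j) := by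
  have hfam : ∀ a t, (fun u => if u = a then s(Sum.inl t, Sum.inr (j u))
      else s(Sum.inl (i u), Sum.inr (j u))) = pairEdges (update i a t) j :=
    fun a t => funext fun u => by by_cases h : u = a <;> simp [h]
  simp only [CondStar, hfam]

lemma IsInducedMatchingFamily.exists_strictMono_condStar
    (hij : IsInducedMatchingFamily (inLex G) (pairEdges i j)) :
    ∃ i' j' : Fin m → Fin n, IsInducedMatchingFamily (inLex G) (pairEdges i' j') ∧
      StrictMono i' ∧ CondStar G i' j' := by
  let S : Set ((Fin m → Fin n) × (Fin m → Fin n)) :=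
    {q | IsInducedMatchingFamily (inLex G) (pairEdges q.1 q.2)}
  obtain ⟨⟨i₁, j₁⟩, h₁, hmin⟩ :=
    S.exists_min_image (fun q => ∑ t, (q.1 t : ℕ)) S.toFinite ⟨(i, j), hij⟩
  let σ := Tuple.sort i₁
  have hσ : IsInducedMatchingFamily (inLex G) (pairEdges (i₁ ∘ σ) (j₁ ∘ σ)) := h₁.comp_equiv σ
  refine ⟨i₁ ∘ σ, j₁ ∘ σ, hσ, (Tuple.monotone_sort i₁).strictMono_of_injective hσ.injective_left,
    condStar_iff.2 fun b u hu _ hmoved => ?_⟩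
  have hle := hmin (update (i₁ ∘ σ) b u, j₁ ∘ σ) hmoved
  have hlt : ∑ t, (update (i₁ ∘ σ) b u t : ℕ) < ∑ t, ((i₁ ∘ σ) t : ℕ) := by
    refine Finset.sum_lt_sum (fun t _ => ?_) ⟨b, Finset.mem_univ b, by simpa using hu⟩
    by_cases ht : t = b
    · subst ht
      simpa using hu.le
    · simp [ht]
  have hsum : ∑ t, ((i₁ ∘ σ) t : ℕ) = ∑ t, (i₁ t : ℕ) := Equiv.sum_comp σ (fun t => (i₁ t : ℕ))
  exact (hsum ▸ hlt).not_ge hle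

lemma IsInducedMatchingFamily.inLex_right_le_left (hG : HasIntervalProperty G)
    (hij : IsInducedMatchingFamily (inLex G) (pairEdges i j)) (hi : StrictMono i) {a b : Fin m}
    (hab : a < b) : j a ≤ i b := by
  obtain ⟨hedge, hnon⟩ := isInducedMatchingFamily_inLex_iff.1 hij
  refine le_of_not_gt fun h => hnon b a hab.ne' ⟨h, ?_⟩
  exact hG _ _ _ _ (hedge a).2 (hedge a).1 (hi hab).le h le_rfl

lemma IsInducedMatchingFamily.inLex_not_adj_of_lt
    (hij : IsInducedMatchingFamily (inLex G) (pairEdges i j)) (hi : StrictMono i) {a b : Fin m}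
    (hab : a < b) : ¬G.Adj (i a) (j b) := fun h =>
  (isInducedMatchingFamily_inLex_iff.1 hij).2 a b hab.ne
    ⟨(hi hab).trans ((isInducedMatchingFamily_inLex_iff.1 hij).1 b).1, h⟩

lemma isInducedPath_of_strictMono {l : ℕ} {p : Fin (l + 1) → Fin n} (hp : StrictMono p)
    (hadj : ∀ a b, a < b → (G.Adj (p a) (p b) ↔ a.val + 1 = b.val)) : IsInducedPath G l p := by
  refine ⟨hp.injective, fun a b => ?_⟩
  rcases lt_trichotomy a b with h | rfl | h
  · rw [hadj a b h]
    have := Fin.lt_def.1 h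
    omega
  · simp
  · rw [adj_comm, hadj b a h]
    have := Fin.lt_def.1 h
    omega

lemma IsInducedMatchingFamily.inLex_isInducedPath_snoc {k : ℕ} {i j : Fin (k + 1) → Fin n}
    (hG : HasIntervalProperty G) (hij : IsInducedMatchingFamily (inLex G) (pairEdges i j))
    (hi : StrictMono i) (hcons : ∀ a b, a.val + 1 = b.val → G.Adj (i a) (i b)) :
    IsInducedPath G (k + 1) (Fin.snoc (α := fun _ => Fin n) i (j (Fin.last k))) := by
  have hedge := (isInducedMatchingFamily_inLex_iff.1 hij).1
  have hlast : ∀ a, i a < j (Fin.last k) :=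
    fun a => (hi.monotone (Fin.le_last a)).trans_lt (hedge _).1
  refine isInducedPath_of_strictMono (Fin.strictMono_iff_lt_succ.2 fun t => ?_) fun a b hab => ?_
  · induction t using Fin.lastCases with
    | last => simpa using hlast (Fin.last k)
    | cast s =>
      rw [Fin.succ_castSucc, Fin.snoc_castSucc, Fin.snoc_castSucc]
      exact hi Fin.castSucc_lt_succ
  · induction b using Fin.lastCases with
    | last =>
      induction a using Fin.lastCases with
      | last => exact absurd hab (lt_irrefl _)
      | cast a =>
        rw [Fin.snoc_castSucc, Fin.snoc_last, Fin.val_castSucc, Fin.val_last,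
          Nat.add_right_cancel_iff]
        refine ⟨fun h => by_contra fun ha => ?_, fun ha => (Fin.ext ha : a = Fin.last k) ▸ (hedge _).2⟩
        exact hij.inLex_not_adj_of_lt hi (Fin.lt_last_iff_ne_last.2 fun h' => ha (by simp [h'])) h
    | cast b =>
      induction a using Fin.lastCases with
      | last => exact absurd hab (not_lt.2 (Fin.le_last _))
      | cast a =>
        rw [Fin.snoc_castSucc, Fin.snoc_castSucc, Fin.val_castSucc, Fin.val_castSucc]
        rw [Fin.castSucc_lt_castSucc_iff] at hab
        refine ⟨fun h => by_contra fun hne => ?_, hcons a b⟩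
        -- `c = a + 1` lies strictly between `a` and `b`, and `[i a, i b]` contains `j c`
        let c : Fin (k + 1) := ⟨a.val + 1, by omega⟩
        have hac : a < c := Fin.lt_def.2 (by simp [c])
        have hcb : c < b := Fin.lt_def.2 (by simp only [c]; omega)
        exact hij.inLex_not_adj_of_lt hi hac (hG _ _ _ _ h (hi hab) le_rfl
          ((hi hac).trans (hedge c).1) (hij.inLex_right_le_left hG hi hcb))

lemma IsInducedMatchingFamily.inLex_strictMono_right (hG : HasIntervalProperty G)
    (hij : IsInducedMatchingFamily (inLex G) (pairEdges i j)) (hi : StrictMono i) :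
    StrictMono j := fun _ b hab =>
  (hij.inLex_right_le_left hG hi hab).trans_lt ((isInducedMatchingFamily_inLex_iff.1 hij).1 b).1

lemma IsInducedMatchingFamily.inLex_not_adj_of_le_of_lt (hG : HasIntervalProperty G)
    (hij : IsInducedMatchingFamily (inLex G) (pairEdges i j)) (hi : StrictMono i) {a b : Fin m}
    (hab : a.val + 1 = b.val) {w : Fin n} (hjw : j a ≤ w) (hwi : w < i b) {t : Fin m}
    (htb : t ≠ b) : ¬(w < j t ∧ G.Adj w (j t)) := by
  rintro ⟨hwt, hadj⟩
  rcases htb.lt_or_gt with htb | hbt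
  · have hta : t ≤ a := Fin.le_def.2 (by have := Fin.lt_def.1 htb; omega)
    exact (hwt.trans_le (((hij.inLex_strictMono_right hG hi).monotone hta).trans hjw)).false
  · have hit : i b < j t := (hi hbt).trans ((isInducedMatchingFamily_inLex_iff.1 hij).1 t).1
    exact hij.inLex_not_adj_of_lt hi hbt (hG _ _ _ _ hadj hwt hwi.le hit le_rfl)

/-- For `w = i b - 1`, either `x_{i b}` can be moved down to `x_w`,
contradicting `(∗)`, or the edge `x_w y_{i b}` can be added, contradicting maximality. -/
lemma IsInducedMatchingFamily.inLex_adj_of_condStar (hG : HasIntervalProperty G)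
    (hconn : G.Preconnected) (hij : IsInducedMatchingFamily (inLex G) (pairEdges i j))
    (hi : StrictMono i) (hstar : CondStar G i j)
    (hmax : ∀ i' j' : Fin (m + 1) → Fin n, ¬IsInducedMatchingFamily (inLex G) (pairEdges i' j'))
    {a b : Fin m} (hab : a.val + 1 = b.val) : G.Adj (i a) (i b) := by
  have hedge := (isInducedMatchingFamily_inLex_iff.1 hij).1
  have hab' : a < b := Fin.lt_def.2 (by omega)
  by_contra hA
  have hja : j a < i b :=
    lt_of_not_ge fun h => hA (hG _ _ _ _ (hedge a).2 (hedge a).1 le_rfl (hi hab') h)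
  have hjai := Fin.lt_def.1 hja
  obtain ⟨w, hw⟩ : ∃ w : Fin n, w.val + 1 = (i b).val := ⟨⟨(i b).val - 1, by omega⟩, by simp; omega⟩
  have hwi : w < i b := Fin.lt_def.2 (by omega)
  have hjw : j a ≤ w := Fin.le_def.2 (by omega)
  have hwnon : ∀ t, t ≠ b → ¬(w < j t ∧ G.Adj w (j t)) :=
    fun t => hij.inLex_not_adj_of_le_of_lt hG hi hab hjw hwi
  by_cases hwj : G.Adj w (j b)
  · refine condStar_iff.1 hstar b w hwi hwj
      (hij.update_left inLex_not_adj_inl_inl inLex_not_adj_inr_inr ?_ fun t ht => ?_)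
    · exact inLex_adj_inl_inr.2 ⟨hwi.trans (hedge b).1, hwj⟩
    · simpa using hwnon t ht
  · refine hmax (Fin.snoc i w) (Fin.snoc j (i b)) (hij.snoc inLex_not_adj_inl_inl inLex_not_adj_inr_inr ?_ (fun t => ?_) fun t => ?_)
    · exact inLex_adj_inl_inr.2 ⟨hwi, hG.adj_of_val_add_one hconn hw⟩
    · rcases eq_or_ne t b with rfl | ht
      · simpa using fun _ => hwj
      · simpa using hwnon t ht
    · rw [inLex_adj_inl_inr]
      rintro ⟨hlt, hadj⟩
      have hta : t ≤ a := Fin.le_def.2 (by have := Fin.lt_def.1 (hi.lt_iff_lt.1 hlt); omega)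
      exact hA (hG _ _ _ _ hadj hlt (hi.monotone hta) (hi hab') le_rfl)

end SortedFamily

lemma HasIntervalProperty.exists_isInducedPath_of_isGreatest {n m : ℕ} {G : SimpleGraph (Fin n)}
    (hG : HasIntervalProperty G) (hconn : G.Connected)
    (hm : IsGreatest {k | ∃ M, IsInducedMatching (inLex G) M ∧ M.ncard = k} m) :
    ∃ p : Fin (m + 1) → Fin n, IsInducedPath G m p := by
  cases m with
  | zero =>
    obtain ⟨v⟩ := hconn.nonempty
    exact ⟨fun _ => v, fun a b _ => Subsingleton.elim (α := Fin 1) a b, fun a b => by simp⟩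
  | succ k =>
    obtain ⟨M, hM, hcard⟩ := hm.1
    obtain ⟨i₀, j₀, h₀⟩ := hM.exists_isInducedMatchingFamily_pairEdges inLex_not_adj_inl_inl
      inLex_not_adj_inr_inr M.toFinite hcard
    obtain ⟨i, j, hij, hi, hstar⟩ := h₀.exists_strictMono_condStar
    have hmax : ∀ i' j' : Fin (k + 2) → Fin n,
        ¬IsInducedMatchingFamily (inLex G) (pairEdges i' j') :=
      fun i' j' h => by simpa using hm.2 ⟨_, h.2, h.ncard_range⟩
    exact ⟨_, hij.inLex_isInducedPath_snoc hG hi fun a b hab =>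
      hij.inLex_adj_of_condStar hG hconn.preconnected hi hstar hmax hab⟩

/-- Proposition 2.4: if `G` is connected with the interval property, `ℓ` is the length of
the longest induced path of `G` and `m = indmatch(in_lex(G))`, then `m = ℓ`. -/
theorem stmt_15 {n : ℕ} (G : SimpleGraph (Fin n)) (hconn : G.Connected)
    (hG : HasIntervalProperty G) (ℓ m : ℕ)
    (hℓ : IsGreatest {l : ℕ | ∃ p : Fin (l + 1) → Fin n, IsInducedPath G l p} ℓ)
    (hm : IsGreatest {k : ℕ | ∃ M : Set (Sym2 (Fin n ⊕ Fin n)),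
            IsInducedMatching (inLex G) M ∧ M.ncard = k} m) :
    m = ℓ := by
  refine le_antisymm (hℓ.2 (hG.exists_isInducedPath_of_isGreatest hconn hm)) ?_
  obtain ⟨p, hp⟩ := hℓ.1
  exact hm.2 (hG.exists_isInducedMatching_inLex hp)
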